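/- arXiv:2003.08929 — 4 statements merged into one kernel-verified Lean document; each statement's English description precedes it below -/
import Mathlib

section
/- Let p > 0 be an even integer. For all real numbers x and Δ, 2^(−p)(x^(p−2)Δ² + Δ^p) ≤ (x+Δ)^p − (x^p + p·x^(p−1)Δ) ≤ p·2^(p−1)(x^(p−2)Δ² + Δ^p). -/
/-!
Write `p = n + 2` and `h` for `Δ`. Both bounds compare the remainder with
`h ^ 2 * max |x| |h| ^ n = max (x ^ n * h ^ 2) (h ^ p)`, which lies between half of and all of
`x ^ n * h ^ 2 + h ^ p`. Above: the remainder is `∑_{k ≤ n} C(p, k) x ^ k h ^ (p - k)`, each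
monomial is at most that quantity, and `∑ C(p, k) ≤ 2 ^ p`. Below: the tangent line at `x`,
evaluated at the midpoint `x + h / 2`, bounds the remainder by the second difference
`(x + h) ^ p + x ^ p - 2 (x + h / 2) ^ p`; expanded around the midpoint it has only nonnegative
(even) terms, among them `2 (h / 2) ^ p` and `2 (x + h / 2) ^ n (h / 2) ^ 2`.
-/

open Finset

variable {R : Type*} [CommRing R]

lemma add_pow_sub_tangent_eq_sum (n : ℕ) (x h : R) :
    (x + h) ^ (n + 2) - (x ^ (n + 2) + ((n + 2 : ℕ) : R) * x ^ (n + 1) * h) =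
      ∑ k ∈ range (n + 1), x ^ k * h ^ (n + 2 - k) * ((n + 2).choose k : R) := by
  rw [add_pow, sum_range_succ, sum_range_succ, Nat.choose_succ_self_right, Nat.choose_self]
  simp only [Nat.sub_self, show n + 2 - (n + 1) = 1 by omega, pow_zero, pow_one, Nat.cast_one]
  ring

section OrderedRing

variable [LinearOrder R] [IsStrictOrderedRing R]

lemma sq_mul_max_abs_pow {n : ℕ} (hn : Even n) (a b : R) :
    b ^ 2 * max |a| |b| ^ n = max (a ^ n * b ^ 2) (b ^ (n + 2)) := by
  rcases le_total |a| |b| with h | h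
  · have : a ^ n ≤ b ^ n := by
      simpa only [hn.pow_abs] using pow_le_pow_left₀ (abs_nonneg a) h n
    rw [max_eq_right h, hn.pow_abs, max_eq_right (by rw [pow_add]; gcongr), pow_add, mul_comm]
  · have : b ^ n ≤ a ^ n := by
      simpa only [hn.pow_abs] using pow_le_pow_left₀ (abs_nonneg b) h n
    rw [max_eq_left h, hn.pow_abs, max_eq_left (by rw [pow_add]; gcongr), mul_comm]

lemma sq_mul_max_abs_pow_le_add {n : ℕ} (hn : Even n) (a b : R) :
    b ^ 2 * max |a| |b| ^ n ≤ a ^ n * b ^ 2 + b ^ (n + 2) := by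
  rw [sq_mul_max_abs_pow hn]
  exact max_le_add_of_nonneg (by have := hn.pow_nonneg a; positivity)
    ((hn.add even_two).pow_nonneg b)

lemma add_le_two_mul_sq_mul_max_abs_pow {n : ℕ} (hn : Even n) (a b : R) :
    a ^ n * b ^ 2 + b ^ (n + 2) ≤ 2 * (b ^ 2 * max |a| |b| ^ n) := by
  rw [sq_mul_max_abs_pow hn, two_mul]
  exact add_le_add (le_max_left _ _) (le_max_right _ _)

lemma pow_mul_pow_le_sq_mul_max_abs_pow {n k : ℕ} (hk : k ≤ n) (a b : R) :
    a ^ k * b ^ (n + 2 - k) ≤ b ^ 2 * max |a| |b| ^ n := by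
  calc a ^ k * b ^ (n + 2 - k) ≤ |a| ^ k * |b| ^ (n - k) * b ^ 2 := by
        refine (le_abs_self _).trans_eq ?_
        rw [abs_mul, abs_pow, abs_pow, show n + 2 - k = n - k + 2 by omega, pow_add, sq_abs,
          mul_assoc]
    _ ≤ max |a| |b| ^ k * max |a| |b| ^ (n - k) * b ^ 2 := by
        gcongr
        exacts [le_max_left _ _, le_max_right _ _]
    _ = b ^ 2 * max |a| |b| ^ n := by
        rw [← pow_add, Nat.add_sub_cancel' hk, mul_comm]

lemma add_pow_sub_tangent_le {n : ℕ} (hn : Even n) (x h : R) :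
    (x + h) ^ (n + 2) - (x ^ (n + 2) + ((n + 2 : ℕ) : R) * x ^ (n + 1) * h) ≤
      ((n + 2 : ℕ) : R) * 2 ^ (n + 1) * (x ^ n * h ^ 2 + h ^ (n + 2)) := by
  set W := h ^ 2 * max |x| |h| ^ n
  have hW : 0 ≤ W := by positivity
  have hchoose : ∑ k ∈ range (n + 1), ((n + 2).choose k : R) ≤ 2 ^ (n + 2) := by
    have := sum_le_sum_of_subset (f := fun k => (n + 2).choose k)
      (range_subset_range.2 (by omega : n + 1 ≤ n + 2 + 1))
    rw [Nat.sum_range_choose] at this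
    exact_mod_cast this
  calc (x + h) ^ (n + 2) - (x ^ (n + 2) + ((n + 2 : ℕ) : R) * x ^ (n + 1) * h)
      = ∑ k ∈ range (n + 1), x ^ k * h ^ (n + 2 - k) * ((n + 2).choose k : R) :=
        add_pow_sub_tangent_eq_sum n x h
    _ ≤ ∑ k ∈ range (n + 1), W * ((n + 2).choose k : R) := by
        gcongr with k hk
        exact pow_mul_pow_le_sq_mul_max_abs_pow (Nat.lt_succ_iff.1 (mem_range.1 hk)) x h
    _ ≤ 2 ^ (n + 2) * W := by rw [← mul_sum, mul_comm]; gcongr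
    _ ≤ ((n + 2 : ℕ) : R) * 2 ^ (n + 1) * W := by
        rw [pow_succ' _ (n + 1)]
        refine mul_le_mul_of_nonneg_right (mul_le_mul_of_nonneg_right ?_ (by positivity)) hW
        exact_mod_cast (by omega : 2 ≤ n + 2)
    _ ≤ ((n + 2 : ℕ) : R) * 2 ^ (n + 1) * (x ^ n * h ^ 2 + h ^ (n + 2)) := by
        gcongr
        exact sq_mul_max_abs_pow_le_add hn x h

lemma Even.pow_add_mul_le_add_pow {n : ℕ} (hn : Even n) (x h : R) :
    x ^ n + n * x ^ (n - 1) * h ≤ (x + h) ^ n := by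
  rcases Nat.eq_zero_or_pos n with rfl | hn0
  · simp
  have habs := _root_.pow_add_mul_le_add_pow (abs_nonneg x) (b := |x + h| - |x|)
    (by linarith [abs_nonneg x, abs_nonneg (x + h)]) n
  rw [add_sub_cancel, hn.pow_abs, hn.pow_abs] at habs
  have hpow : x ^ (n - 1) * x = |x| ^ (n - 1) * |x| := by
    rw [pow_sub_one_mul hn0.ne', pow_sub_one_mul hn0.ne', hn.pow_abs]
  have hmul : x ^ (n - 1) * (x + h) ≤ |x| ^ (n - 1) * |x + h| := by
    rw [← abs_pow, ← abs_mul]; exact le_abs_self _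
  have : x ^ (n - 1) * h ≤ |x| ^ (n - 1) * (|x + h| - |x|) := by
    rw [mul_sub, ← hpow]; linear_combination hmul
  calc x ^ n + n * x ^ (n - 1) * h ≤ x ^ n + n * (|x| ^ (n - 1) * (|x + h| - |x|)) := by
        rw [mul_assoc]; gcongr
    _ ≤ (x + h) ^ n := by rwa [← mul_assoc]

lemma two_mul_pow_add_two_mul_le_add_pow_add_sub_pow {n m : ℕ} (hn : Even n) (hm : Even m)
    (hm0 : m ≠ 0) (hmn : m ≤ n) (u v : R) :
    2 * u ^ n + 2 * (u ^ (n - m) * v ^ m) ≤ (u + v) ^ n + (u - v) ^ n := by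
  set f : ℕ → R := fun k => (v ^ k + (-v) ^ k) * u ^ (n - k) * (n.choose k : R)
  have hsum : (u + v) ^ n + (u - v) ^ n = ∑ k ∈ range (n + 1), f k := by
    rw [add_comm u, sub_eq_neg_add, add_pow, add_pow, ← sum_add_distrib]
    exact sum_congr rfl fun k _ => by ring
  have hf : ∀ k ∈ range (n + 1), 0 ≤ f k := by
    intro k hk
    rcases Nat.even_or_odd k with hk' | hk'
    · have hnk : Even (n - k) :=
        (Nat.even_sub (Nat.lt_succ_iff.1 (mem_range.1 hk))).2 (iff_of_true hn hk')
      have := hk'.pow_nonneg v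
      have := hnk.pow_nonneg u
      simp only [f, hk'.neg_pow]
      positivity
    · simp [f, hk'.neg_pow]
  have h0 : f 0 = 2 * u ^ n := by simp only [f]; norm_num
  have hm' : 2 * (u ^ (n - m) * v ^ m) ≤ f m := by
    have : 0 ≤ u ^ (n - m) * v ^ m :=
      mul_nonneg ((Nat.even_sub hmn).2 (iff_of_true hn hm) |>.pow_nonneg u) (hm.pow_nonneg v)
    have hc : (1 : R) ≤ n.choose m := by exact_mod_cast Nat.choose_pos hmn
    calc 2 * (u ^ (n - m) * v ^ m) ≤ 2 * (u ^ (n - m) * v ^ m) * (n.choose m : R) :=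
          le_mul_of_one_le_right (by positivity) hc
      _ = f m := by simp only [f, hm.neg_pow]; ring
  rw [hsum, ← h0]
  exact (add_le_add le_rfl hm').trans
    (add_le_sum (i := 0) (j := m) hf (by simp) (mem_range.2 (by omega)) (Ne.symm hm0))

lemma two_mul_sq_mul_max_abs_pow_le_add_pow_add_sub_pow {n : ℕ} (hn : Even n) (u v : R) :
    2 * (v ^ 2 * max |u| |v| ^ n) ≤ (u + v) ^ (n + 2) + (u - v) ^ (n + 2) - 2 * u ^ (n + 2) := by
  have hn2 : Even (n + 2) := hn.add even_two
  have hsq := two_mul_pow_add_two_mul_le_add_pow_add_sub_pow hn2 even_two two_ne_zero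
    (by omega) u v
  have hpow := two_mul_pow_add_two_mul_le_add_pow_add_sub_pow hn2 hn2 (by omega) le_rfl u v
  rw [Nat.add_sub_cancel] at hsq
  rw [Nat.sub_self, pow_zero, one_mul] at hpow
  rw [sq_mul_max_abs_pow hn, mul_max_of_nonneg _ _ zero_le_two, max_le_iff]
  constructor <;> linarith

end OrderedRing

lemma div_two_pow_le_add_pow_sub_tangent {K : Type*} [Field K] [LinearOrder K]
    [IsStrictOrderedRing K] {n : ℕ} (hn : Even n) (x h : K) :
    (x ^ n * h ^ 2 + h ^ (n + 2)) / 2 ^ (n + 2) ≤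
      (x + h) ^ (n + 2) - (x ^ (n + 2) + ((n + 2 : ℕ) : K) * x ^ (n + 1) * h) := by
  obtain ⟨v, rfl⟩ : ∃ v, h = 2 * v := ⟨h / 2, by ring⟩
  have hmax : max |x| |2 * v| ≤ 2 * max |x + v| |v| := by
    rw [abs_mul, abs_two, max_le_iff, two_mul, two_mul]
    constructor
    · calc |x| ≤ |x + v| + |v| := by simpa using abs_sub (x + v) v
        _ ≤ _ := add_le_add (le_max_left _ _) (le_max_right _ _)
    · exact add_le_add (le_max_right _ _) (le_max_right _ _)
  have htangent : x ^ (n + 2) + ((n + 2 : ℕ) : K) * x ^ (n + 1) * v ≤ (x + v) ^ (n + 2) :=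
    (hn.add even_two).pow_add_mul_le_add_pow x v
  have hsecond := two_mul_sq_mul_max_abs_pow_le_add_pow_add_sub_pow hn (x + v) v
  rw [add_assoc, ← two_mul, add_sub_cancel_right] at hsecond
  calc (x ^ n * (2 * v) ^ 2 + (2 * v) ^ (n + 2)) / 2 ^ (n + 2)
      ≤ 2 * ((2 * v) ^ 2 * max |x| |2 * v| ^ n) / 2 ^ (n + 2) := by
        gcongr; exact add_le_two_mul_sq_mul_max_abs_pow hn x (2 * v)
    _ ≤ 2 * ((2 * v) ^ 2 * (2 * max |x + v| |v|) ^ n) / 2 ^ (n + 2) := by gcongr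
    _ = 2 * (v ^ 2 * max |x + v| |v| ^ n) := by field_simp; ring
    _ ≤ (x + 2 * v) ^ (n + 2) + x ^ (n + 2) - 2 * (x + v) ^ (n + 2) := hsecond
    _ ≤ (x + 2 * v) ^ (n + 2) - (x ^ (n + 2) + ((n + 2 : ℕ) : K) * x ^ (n + 1) * (2 * v)) := by
        linear_combination 2 * htangent

theorem stmt_4 (p : ℕ) (hp : Even p) (hp0 : 0 < p) (x Δ : ℝ) :
    (2:ℝ)^(-(p:ℤ)) * (x^(p-2) * Δ^2 + Δ^p) ≤ (x+Δ)^p - (x^p + p * x^(p-1) * Δ) ∧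
    (x+Δ)^p - (x^p + p * x^(p-1) * Δ) ≤ p * 2^(p-1) * (x^(p-2) * Δ^2 + Δ^p) := by
  obtain ⟨n, rfl⟩ : ∃ n, p = n + 2 := ⟨p - 2, by obtain ⟨k, rfl⟩ := hp; omega⟩
  have hn : Even n := (Nat.even_add.1 hp).2 even_two
  rw [zpow_neg, zpow_natCast, inv_mul_eq_div]
  exact ⟨div_two_pow_le_add_pow_sub_tangent hn x Δ, add_pow_sub_tangent_le hn x Δ⟩
end

section
/- Let h : ℝ → ℝ be twice differentiable with h(0) = h'(0) = 0 and c₁ ≤ h''(x) ≤ c₂ for all x, with c₂ ≥ c₁ > 0. Then for every even integer p > 0 and all real x, Δ: (8c₂)^(−2p)·c₁^(3p)·(x^(2p−2)Δ² + Δ^(2p)) ≤ h(x+Δ)^p − (h(x)^p + p·h(x)^(p−1)·h'(x)·Δ) ≤ (16c₂)^p·(x^(2p−2)Δ² + Δ^(2p)). -/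
/-!
The middle expression is the Bregman divergence of `G = h ^ p` between `x` and `x + Δ`.
Comparing `h` with the quadratics `c₁ t ^ 2 / 2 ≤ h t ≤ c₂ t ^ 2 / 2`, and `h'` with `c₂ t`, traps
`G''(t)` between constant multiples of `t ^ (2p - 2)`. The upper estimate is then Taylor's bound
with the largest value of `G''` on the segment. For the lower one, `G` is convex, so its Bregman
divergence can only decrease when `[x, x + Δ]` is shrunk to a sub-segment; one of its quarters stays
at distance of order `max |x| |Δ|` from `0`, and there `G''` is of order `max |x| |Δ| ^ (2p - 2)`.
-/

open Set

lemma add_mul_mem_uIcc {x Δ s : ℝ} (hs₀ : 0 ≤ s) (hs₁ : s ≤ 1) : x + s * Δ ∈ uIcc x (x + Δ) := by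
  rcases le_total 0 Δ with h | h
  · exact mem_uIcc.2 (Or.inl ⟨by nlinarith, by nlinarith⟩)
  · exact mem_uIcc.2 (Or.inr ⟨by nlinarith, by nlinarith⟩)

def bregman (f f' : ℝ → ℝ) (a b : ℝ) : ℝ := f b - f a - f' a * (b - a)

section Bregman

variable {f f' f'' : ℝ → ℝ} {a b c : ℝ}

lemma bregman_nonneg_of_monotoneOn (hf : ∀ t ∈ uIcc a b, HasDerivAt f (f' t) t)
    (hmono : MonotoneOn f' (uIcc a b)) : 0 ≤ bregman f f' a b := by
  have hcont : ContinuousOn f (uIcc a b) := fun t ht => (hf t ht).continuousAt.continuousWithinAt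
  rcases lt_trichotomy a b with hab | rfl | hba
  · rw [uIcc_of_le hab.le] at hf hmono hcont
    obtain ⟨c, hc, hslope⟩ := exists_hasDerivAt_eq_slope f f' hab hcont
      fun t ht => hf t (Ioo_subset_Icc_self ht)
    have hfc : f b - f a = f' c * (b - a) := by
      rw [hslope, div_mul_cancel₀ _ (sub_ne_zero.2 hab.ne')]
    have : f' a ≤ f' c := hmono (left_mem_Icc.2 hab.le) (Ioo_subset_Icc_self hc) hc.1.le
    rw [bregman, hfc]
    nlinarith
  · simp [bregman]
  · rw [uIcc_of_ge hba.le] at hf hmono hcont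
    obtain ⟨c, hc, hslope⟩ := exists_hasDerivAt_eq_slope f f' hba hcont
      fun t ht => hf t (Ioo_subset_Icc_self ht)
    have hfc : f a - f b = f' c * (a - b) := by
      rw [hslope, div_mul_cancel₀ _ (sub_ne_zero.2 hba.ne')]
    have : f' c ≤ f' a := hmono (Ioo_subset_Icc_self hc) (right_mem_Icc.2 hba.le) hc.2.le
    rw [bregman]
    nlinarith

lemma bregman_add_bregman (f f' : ℝ → ℝ) (a b c : ℝ) :
    bregman f f' a b + bregman f f' b c + (f' b - f' a) * (c - b) = bregman f f' a c := by
  simp only [bregman]; ring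

lemma Monotone.sub_mul_sub_nonneg_of_mem_uIcc (hmono : Monotone f') (hb : b ∈ uIcc a c) :
    0 ≤ (f' b - f' a) * (c - b) := by
  rcases mem_uIcc.1 hb with ⟨hab, hbc⟩ | ⟨hcb, hba⟩
  · exact mul_nonneg (sub_nonneg.2 (hmono hab)) (sub_nonneg.2 hbc)
  · exact mul_nonneg_of_nonpos_of_nonpos (sub_nonpos.2 (hmono hba)) (sub_nonpos.2 hcb)

lemma bregman_le_bregman_of_mem_uIcc_left (hf : ∀ t, HasDerivAt f (f' t) t) (hmono : Monotone f')
    (hb : b ∈ uIcc a c) : bregman f f' a b ≤ bregman f f' a c := by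
  rw [← bregman_add_bregman f f' a b c]
  linarith [bregman_nonneg_of_monotoneOn (fun t _ => hf t) (hmono.monotoneOn (uIcc b c)),
    hmono.sub_mul_sub_nonneg_of_mem_uIcc hb]

lemma bregman_le_bregman_of_mem_uIcc_right (hf : ∀ t, HasDerivAt f (f' t) t)
    (hmono : Monotone f') (hb : b ∈ uIcc a c) : bregman f f' b c ≤ bregman f f' a c := by
  rw [← bregman_add_bregman f f' a b c]
  linarith [bregman_nonneg_of_monotoneOn (fun t _ => hf t) (hmono.monotoneOn (uIcc a b)),
    hmono.sub_mul_sub_nonneg_of_mem_uIcc hb]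

lemma le_bregman_of_le_deriv2 {m : ℝ} (hf : ∀ t ∈ uIcc a b, HasDerivAt f (f' t) t)
    (hf' : ∀ t ∈ uIcc a b, HasDerivAt f' (f'' t) t) (hm : ∀ t ∈ uIcc a b, m ≤ f'' t) :
    m / 2 * (b - a) ^ 2 ≤ bregman f f' a b := by
  set g' : ℝ → ℝ := fun t => f' t - m * (t - a)
  have hg : ∀ t ∈ uIcc a b, HasDerivAt (fun t => f t - m / 2 * (t - a) ^ 2) (g' t) t := by
    intro t ht
    refine ((hf t ht).fun_sub
      ((((hasDerivAt_id t).sub_const a).pow 2).const_mul (m / 2))).congr_deriv ?_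
    simp only [g', id_eq]; push_cast; ring
  have hg' : ∀ t ∈ uIcc a b, HasDerivAt g' (f'' t - m) t := fun t ht => by
    simpa using (hf' t ht).fun_sub (((hasDerivAt_id t).sub_const a).const_mul m)
  have hmono : MonotoneOn g' (uIcc a b) :=
    monotoneOn_of_hasDerivWithinAt_nonneg (convex_uIcc a b)
      (fun t ht => (hg' t ht).continuousAt.continuousWithinAt)
      (fun t ht => (hg' t (interior_subset ht)).hasDerivWithinAt)
      (fun t ht => sub_nonneg.2 (hm t (interior_subset ht)))
  have := bregman_nonneg_of_monotoneOn hg hmono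
  simp only [bregman, g'] at this ⊢
  nlinarith

lemma bregman_le_of_deriv2_le {M : ℝ} (hf : ∀ t ∈ uIcc a b, HasDerivAt f (f' t) t)
    (hf' : ∀ t ∈ uIcc a b, HasDerivAt f' (f'' t) t) (hM : ∀ t ∈ uIcc a b, f'' t ≤ M) :
    bregman f f' a b ≤ M / 2 * (b - a) ^ 2 := by
  have := le_bregman_of_le_deriv2 (f := -f) (f' := -f') (f'' := -f'') (m := -M)
    (fun t ht => (hf t ht).neg) (fun t ht => (hf' t ht).neg) fun t ht => neg_le_neg (hM t ht)
  simp only [bregman, Pi.neg_apply] at this ⊢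
  linarith

section PowerBounds

variable {K : ℝ} {n : ℕ}

lemma monotone_of_mul_pow_le_deriv (hK : 0 ≤ K) (hf' : ∀ t, HasDerivAt f' (f'' t) t)
    (hf'' : ∀ t, K * t ^ (2 * n) ≤ f'' t) : Monotone f' :=
  monotone_of_hasDerivAt_nonneg hf' fun t =>
    (mul_nonneg hK ((even_two_mul n).pow_nonneg t)).trans (hf'' t)

lemma le_bregman_of_abs_le_abs {r : ℝ} (hK : 0 ≤ K) (hf : ∀ t, HasDerivAt f (f' t) t)
    (hf' : ∀ t, HasDerivAt f' (f'' t) t) (hf'' : ∀ t, K * t ^ (2 * n) ≤ f'' t)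
    (hr : ∀ t ∈ uIcc a b, |r| ≤ |t|) : K * r ^ (2 * n) / 2 * (b - a) ^ 2 ≤ bregman f f' a b :=
  le_bregman_of_le_deriv2 (fun t _ => hf t) (fun t _ => hf' t) fun t ht => by
    refine le_trans ?_ (hf'' t)
    rw [pow_mul, pow_mul]
    exact mul_le_mul_of_nonneg_left (pow_le_pow_left₀ (sq_nonneg r) (sq_le_sq.2 (hr t ht)) n) hK

lemma le_bregman_add_of_abs_le_two_mul_abs {x Δ : ℝ} (hK : 0 ≤ K)
    (hf : ∀ t, HasDerivAt f (f' t) t) (hf' : ∀ t, HasDerivAt f' (f'' t) t)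
    (hf'' : ∀ t, K * t ^ (2 * n) ≤ f'' t) (hΔ : |Δ| ≤ 2 * |x|) :
    K / (64 * 16 ^ n) * (x ^ (2 * n) * Δ ^ 2 + Δ ^ (2 * n + 2)) ≤ bregman f f' x (x + Δ) := by
  have hmono := monotone_of_mul_pow_le_deriv hK hf' hf''
  have hnear := le_bregman_of_abs_le_abs (a := x) (b := x + 1 / 4 * Δ) (r := x / 2) hK hf hf' hf''
    fun t ht => by
      have hdist := abs_sub_left_of_mem_uIcc ht
      rw [add_sub_cancel_left, abs_mul] at hdist
      have := abs_sub_abs_le_abs_sub x t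
      rw [abs_sub_comm] at this
      rw [abs_div]
      norm_num at hdist ⊢
      linarith
  have hle := bregman_le_bregman_of_mem_uIcc_left hf hmono
    (add_mul_mem_uIcc (x := x) (Δ := Δ) (by norm_num : (0 : ℝ) ≤ 1 / 4) (by norm_num))
  have hΔx : (Δ ^ 2) ^ n ≤ 4 ^ n * (x ^ 2) ^ n := by
    rw [← mul_pow]
    exact pow_le_pow_left₀ (sq_nonneg _) (by nlinarith [sq_abs x, sq_abs Δ, abs_nonneg Δ]) n
  have hx4 : (x / 2) ^ (2 * n) = (x ^ 2) ^ n / 4 ^ n := by rw [pow_mul, div_pow, div_pow]; norm_num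
  rw [hx4, add_sub_cancel_left] at hnear
  simp only [pow_add _ (2 * n), pow_mul]
  have h16 : (16 : ℝ) ^ n = 4 ^ n * 4 ^ n := by rw [← mul_pow]; norm_num
  have h4 : (1 : ℝ) ≤ 4 ^ n := one_le_pow₀ (by norm_num)
  have hX : 0 ≤ (x ^ 2) ^ n := by positivity
  calc K / (64 * 16 ^ n) * ((x ^ 2) ^ n * Δ ^ 2 + (Δ ^ 2) ^ n * Δ ^ 2)
      ≤ K / (64 * 16 ^ n) * ((x ^ 2) ^ n * Δ ^ 2 + 4 ^ n * (x ^ 2) ^ n * Δ ^ 2) := by gcongr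
    _ ≤ K / (64 * 16 ^ n) * (4 ^ n * (x ^ 2) ^ n * Δ ^ 2 + 4 ^ n * (x ^ 2) ^ n * Δ ^ 2) := by
      gcongr; nlinarith
    _ = K * ((x ^ 2) ^ n / 4 ^ n) / 2 * (1 / 4 * Δ) ^ 2 := by rw [h16]; field_simp; ring
    _ ≤ bregman f f' x (x + Δ) := hnear.trans hle

lemma le_bregman_add_of_two_mul_abs_lt_abs {x Δ : ℝ} (hK : 0 ≤ K)
    (hf : ∀ t, HasDerivAt f (f' t) t) (hf' : ∀ t, HasDerivAt f' (f'' t) t)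
    (hf'' : ∀ t, K * t ^ (2 * n) ≤ f'' t) (hΔ : 2 * |x| < |Δ|) :
    K / (64 * 16 ^ n) * (x ^ (2 * n) * Δ ^ 2 + Δ ^ (2 * n + 2)) ≤ bregman f f' x (x + Δ) := by
  have hmono := monotone_of_mul_pow_le_deriv hK hf' hf''
  have hfar := le_bregman_of_abs_le_abs (a := x + 3 / 4 * Δ) (b := x + Δ) (r := Δ / 4)
    hK hf hf' hf'' fun t ht => by
      have hdist := abs_sub_right_of_mem_uIcc ht
      rw [show x + Δ - (x + 3 / 4 * Δ) = 1 / 4 * Δ by ring, abs_mul] at hdist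
      have := abs_sub_abs_le_abs_sub (x + Δ) t
      have := abs_sub (x + Δ) x
      rw [add_sub_cancel_left] at this
      rw [abs_div]
      norm_num at hdist ⊢
      linarith
  have hle := bregman_le_bregman_of_mem_uIcc_right hf hmono
    (add_mul_mem_uIcc (x := x) (Δ := Δ) (by norm_num : (0 : ℝ) ≤ 3 / 4) (by norm_num))
  have hxΔ : (x ^ 2) ^ n ≤ (Δ ^ 2) ^ n :=
    pow_le_pow_left₀ (sq_nonneg _) (by nlinarith [sq_abs x, sq_abs Δ, abs_nonneg x]) n
  have hΔ16 : (Δ / 4) ^ (2 * n) = (Δ ^ 2) ^ n / 16 ^ n := by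
    rw [pow_mul, div_pow, div_pow]; norm_num
  rw [hΔ16] at hfar
  simp only [pow_add _ (2 * n), pow_mul]
  calc K / (64 * 16 ^ n) * ((x ^ 2) ^ n * Δ ^ 2 + (Δ ^ 2) ^ n * Δ ^ 2)
      ≤ K / (64 * 16 ^ n) * ((Δ ^ 2) ^ n * Δ ^ 2 + (Δ ^ 2) ^ n * Δ ^ 2) := by gcongr
    _ = K * ((Δ ^ 2) ^ n / 16 ^ n) / 2 * (x + Δ - (x + 3 / 4 * Δ)) ^ 2 := by field_simp; ring
    _ ≤ bregman f f' x (x + Δ) := hfar.trans hle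

lemma le_bregman_add_of_pow_le_deriv2 (hK : 0 ≤ K)
    (hf : ∀ t, HasDerivAt f (f' t) t) (hf' : ∀ t, HasDerivAt f' (f'' t) t)
    (hf'' : ∀ t, K * t ^ (2 * n) ≤ f'' t) (x Δ : ℝ) :
    K / (64 * 16 ^ n) * (x ^ (2 * n) * Δ ^ 2 + Δ ^ (2 * n + 2)) ≤ bregman f f' x (x + Δ) := by
  rcases le_or_gt |Δ| (2 * |x|) with hΔ | hΔ
  · exact le_bregman_add_of_abs_le_two_mul_abs hK hf hf' hf'' hΔ
  · exact le_bregman_add_of_two_mul_abs_lt_abs hK hf hf' hf'' hΔ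

lemma bregman_add_le_of_deriv2_le_pow (hK : 0 ≤ K)
    (hf : ∀ t, HasDerivAt f (f' t) t) (hf' : ∀ t, HasDerivAt f' (f'' t) t)
    (hf'' : ∀ t, f'' t ≤ K * t ^ (2 * n)) (x Δ : ℝ) :
    bregman f f' x (x + Δ) ≤ 4 ^ n * K / 2 * (x ^ (2 * n) * Δ ^ 2 + Δ ^ (2 * n + 2)) := by
  simp only [pow_add _ (2 * n), pow_mul] at hf'' ⊢
  have hpow : ∀ t ∈ uIcc x (x + Δ), (t ^ 2) ^ n ≤ 4 ^ n * ((x ^ 2) ^ n + (Δ ^ 2) ^ n) := by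
    intro t ht
    have hdist := abs_sub_left_of_mem_uIcc ht
    rw [add_sub_cancel_left] at hdist
    have := abs_sub_abs_le_abs_sub t x
    have hx : 0 ≤ (x ^ 2) ^ n := by positivity
    have hΔ : 0 ≤ (Δ ^ 2) ^ n := by positivity
    rcases le_total |x| |Δ| with h | h
    · calc (t ^ 2) ^ n ≤ ((2 * Δ) ^ 2) ^ n :=
            pow_le_pow_left₀ (sq_nonneg t) (sq_le_sq.2 (by rw [abs_mul, abs_two]; linarith)) n
        _ = 4 ^ n * (Δ ^ 2) ^ n := by rw [← mul_pow]; ring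
        _ ≤ 4 ^ n * ((x ^ 2) ^ n + (Δ ^ 2) ^ n) := by gcongr; linarith
    · calc (t ^ 2) ^ n ≤ ((2 * x) ^ 2) ^ n :=
            pow_le_pow_left₀ (sq_nonneg t) (sq_le_sq.2 (by rw [abs_mul, abs_two]; linarith)) n
        _ = 4 ^ n * (x ^ 2) ^ n := by rw [← mul_pow]; ring
        _ ≤ 4 ^ n * ((x ^ 2) ^ n + (Δ ^ 2) ^ n) := by gcongr; linarith
  calc bregman f f' x (x + Δ)
      ≤ K * (4 ^ n * ((x ^ 2) ^ n + (Δ ^ 2) ^ n)) / 2 * (x + Δ - x) ^ 2 :=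
        bregman_le_of_deriv2_le (fun t _ => hf t) (fun t _ => hf' t) fun t ht =>
          (hf'' t).trans (mul_le_mul_of_nonneg_left (hpow t ht) hK)
    _ = 4 ^ n * K / 2 * ((x ^ 2) ^ n * Δ ^ 2 + (Δ ^ 2) ^ n * Δ ^ 2) := by ring

end PowerBounds

end Bregman

section PowerOfStronglyConvex

variable {h h' h'' : ℝ → ℝ} {c₁ c₂ : ℝ}

lemma mul_sq_le_of_le_deriv2 (hh : ∀ t, HasDerivAt h (h' t) t)
    (hh' : ∀ t, HasDerivAt h' (h'' t) t) (h0 : h 0 = 0) (h0' : h' 0 = 0)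
    (hc₁ : ∀ t, c₁ ≤ h'' t) (x : ℝ) : c₁ / 2 * x ^ 2 ≤ h x := by
  simpa [bregman, h0, h0'] using
    le_bregman_of_le_deriv2 (a := 0) (b := x) (fun t _ => hh t) (fun t _ => hh' t) fun t _ => hc₁ t

lemma le_mul_sq_of_deriv2_le (hh : ∀ t, HasDerivAt h (h' t) t)
    (hh' : ∀ t, HasDerivAt h' (h'' t) t) (h0 : h 0 = 0) (h0' : h' 0 = 0)
    (hc₂ : ∀ t, h'' t ≤ c₂) (x : ℝ) : h x ≤ c₂ / 2 * x ^ 2 := by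
  simpa [bregman, h0, h0'] using
    bregman_le_of_deriv2_le (a := 0) (b := x) (fun t _ => hh t) (fun t _ => hh' t) fun t _ => hc₂ t

lemma abs_le_mul_abs_of_abs_deriv_le (hh' : ∀ t, HasDerivAt h' (h'' t) t) (h0' : h' 0 = 0)
    (hc₂ : ∀ t, |h'' t| ≤ c₂) (x : ℝ) : |h' x| ≤ c₂ * |x| := by
  simpa [h0'] using convex_univ.norm_image_sub_le_of_norm_hasDerivWithin_le (x := 0) (y := x)
    (fun t _ => (hh' t).hasDerivWithinAt) (fun t _ => hc₂ t) (mem_univ 0) (mem_univ x)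

lemma hasDerivAt_deriv_pow (hh : ∀ t, HasDerivAt h (h' t) t)
    (hh' : ∀ t, HasDerivAt h' (h'' t) t) (n : ℕ) (t : ℝ) :
    HasDerivAt (fun t => (n + 1 : ℝ) * h t ^ n * h' t)
      ((n + 1) * (n * h t ^ (n - 1) * h' t * h' t + h t ^ n * h'' t)) t := by
  have := (((hh t).fun_pow n).fun_mul (hh' t)).const_mul ((n : ℝ) + 1)
  simp only [← mul_assoc] at this
  exact this.congr_deriv (by ring)

lemma le_deriv2_pow (hh : ∀ t, HasDerivAt h (h' t) t) (hh' : ∀ t, HasDerivAt h' (h'' t) t)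
    (h0 : h 0 = 0) (h0' : h' 0 = 0) (hc₁ : 0 < c₁) (hc₁h : ∀ t, c₁ ≤ h'' t) (n : ℕ) (t : ℝ) :
    2 * (c₁ / 2) ^ (n + 1) * t ^ (2 * n) ≤
      (n + 1) * (n * h t ^ (n - 1) * h' t * h' t + h t ^ n * h'' t) := by
  have hlow := mul_sq_le_of_le_deriv2 hh hh' h0 h0' hc₁h t
  have hnonneg : 0 ≤ h t := le_trans (by positivity) hlow
  have hpow : (c₁ / 2 * t ^ 2) ^ n ≤ h t ^ n := pow_le_pow_left₀ (by positivity) hlow n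
  have : (c₁ / 2 * t ^ 2) ^ n * c₁ ≤ h t ^ n * h'' t :=
    mul_le_mul hpow (hc₁h t) hc₁.le (by positivity)
  have : 0 ≤ n * h t ^ (n - 1) * h' t * h' t := by
    rw [mul_assoc]; exact mul_nonneg (by positivity) (mul_self_nonneg _)
  calc 2 * (c₁ / 2) ^ (n + 1) * t ^ (2 * n) = (c₁ / 2 * t ^ 2) ^ n * c₁ := by
        rw [mul_pow, pow_mul, pow_succ]; ring
    _ ≤ 1 * (n * h t ^ (n - 1) * h' t * h' t + h t ^ n * h'' t) := by linarith
    _ ≤ (n + 1) * (n * h t ^ (n - 1) * h' t * h' t + h t ^ n * h'' t) := by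
        have : 0 ≤ (c₁ / 2 * t ^ 2) ^ n * c₁ := by positivity
        gcongr
        · linarith
        · linarith [Nat.cast_nonneg (α := ℝ) n]

lemma deriv2_pow_le (hh : ∀ t, HasDerivAt h (h' t) t) (hh' : ∀ t, HasDerivAt h' (h'' t) t)
    (h0 : h 0 = 0) (h0' : h' 0 = 0) (hc₁ : 0 < c₁)
    (hc : ∀ t, c₁ ≤ h'' t ∧ h'' t ≤ c₂) (n : ℕ) (t : ℝ) :
    (n + 1) * (n * h t ^ (n - 1) * h' t * h' t + h t ^ n * h'' t) ≤
      (n + 1) ^ 2 * c₂ ^ (n + 1) * t ^ (2 * n) := by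
  have hc₂ : 0 < c₂ := hc₁.trans_le ((hc 0).1.trans (hc 0).2)
  have hnonneg : 0 ≤ h t :=
    le_trans (by positivity) (mul_sq_le_of_le_deriv2 hh hh' h0 h0' (fun t => (hc t).1) t)
  have hup : h t ≤ c₂ * t ^ 2 := by
    nlinarith [le_mul_sq_of_deriv2_le hh hh' h0 h0' (fun t => (hc t).2) t, sq_nonneg t]
  have hderiv : h' t * h' t ≤ c₂ * (c₂ * t ^ 2) := by
    have := abs_le_mul_abs_of_abs_deriv_le hh' h0' (fun t => abs_le.2
      ⟨by linarith [(hc t).1], (hc t).2⟩) t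
    have := mul_le_mul this this (abs_nonneg _) (by nlinarith [abs_nonneg t])
    rw [abs_mul_abs_self, mul_mul_mul_comm, abs_mul_abs_self] at this
    linarith
  have hfirst : n * h t ^ (n - 1) * h' t * h' t ≤ n * ((c₂ * t ^ 2) ^ n * c₂) := by
    rcases n with _ | m
    · simp
    · have := mul_le_mul (pow_le_pow_left₀ hnonneg hup m) hderiv (mul_self_nonneg _)
        (by positivity)
      rw [Nat.add_sub_cancel, mul_assoc _ _ (h' t), mul_assoc]
      exact mul_le_mul_of_nonneg_left (this.trans_eq (by ring)) (by positivity)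
  have hsecond : h t ^ n * h'' t ≤ (c₂ * t ^ 2) ^ n * c₂ :=
    mul_le_mul (pow_le_pow_left₀ hnonneg hup n) (hc t).2 (by linarith [(hc t).1]) (by positivity)
  calc (n + 1) * (n * h t ^ (n - 1) * h' t * h' t + h t ^ n * h'' t)
      ≤ (n + 1) * (n * ((c₂ * t ^ 2) ^ n * c₂) + (c₂ * t ^ 2) ^ n * c₂) := by
        gcongr
    _ = (n + 1) ^ 2 * c₂ ^ (n + 1) * t ^ (2 * n) := by rw [mul_pow, pow_mul, pow_succ]; ring

lemma pow_three_mul_div_pow_two_mul_le {c₁ c₂ : ℝ} (hc₁ : 0 < c₁) (hc : c₁ ≤ c₂) (n : ℕ) :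
    c₁ ^ (3 * (n + 1)) / (8 * c₂) ^ (2 * (n + 1)) ≤ 2 * (c₁ / 2) ^ (n + 1) / (64 * 16 ^ n) := by
  have hc₂ : 0 < c₂ := hc₁.trans_le hc
  calc c₁ ^ (3 * (n + 1)) / (8 * c₂) ^ (2 * (n + 1)) = (c₁ ^ 3 / (64 * c₂ ^ 2)) ^ (n + 1) := by
        rw [pow_mul, pow_mul, ← div_pow]; ring
    _ ≤ (c₁ / 64) ^ (n + 1) := by
        refine pow_le_pow_left₀ (by positivity) ?_ _
        rw [div_le_div_iff₀ (by positivity) (by norm_num)]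
        nlinarith [mul_le_mul hc hc hc₁.le hc₂.le, pow_pos hc₁ 3]
    _ = 2 * (c₁ / 2) ^ (n + 1) / (64 * 16 ^ n) / 2 ^ n := by
        rw [div_pow, div_pow, pow_succ, pow_succ, show (64 : ℝ) = 2 * 32 by norm_num, mul_pow,
          show (32 : ℝ) = 2 * 16 by norm_num, mul_pow]
        field_simp
        ring
    _ ≤ 2 * (c₁ / 2) ^ (n + 1) / (64 * 16 ^ n) :=
        div_le_self (by positivity) (one_le_pow₀ (by norm_num))

lemma four_pow_mul_succ_sq_mul_div_two_le {c₂ : ℝ} (hc₂ : 0 ≤ c₂) (n : ℕ) :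
    4 ^ n * ((n + 1) ^ 2 * c₂ ^ (n + 1)) / 2 ≤ (16 * c₂) ^ (n + 1) := by
  have hn : ((n : ℝ) + 1) ^ 2 ≤ 4 ^ (n + 1) := by
    have : ((n + 1 : ℕ) : ℝ) ≤ 2 ^ (n + 1) := by exact_mod_cast (Nat.lt_two_pow_self).le
    calc ((n : ℝ) + 1) ^ 2 ≤ (2 ^ (n + 1)) ^ 2 := by gcongr; exact_mod_cast this
      _ = 4 ^ (n + 1) := by rw [← pow_mul, mul_comm, pow_mul]; norm_num
  calc 4 ^ n * ((n + 1) ^ 2 * c₂ ^ (n + 1)) / 2 ≤ 4 ^ n * (4 ^ (n + 1) * c₂ ^ (n + 1)) / 2 := by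
        gcongr
    _ ≤ (16 * c₂) ^ (n + 1) := by
        rw [mul_pow, show (16 : ℝ) = 4 * 4 by norm_num, mul_pow, pow_succ 4 n]
        have : 0 ≤ (4 : ℝ) ^ n * 4 ^ n * c₂ ^ (n + 1) := by positivity
        nlinarith

theorem stmt_6 (h : ℝ → ℝ) (c₁ c₂ : ℝ) (hc₁ : 0 < c₁) (hc : c₁ ≤ c₂)
    (hd : ∀ x, DifferentiableAt ℝ h x) (hd2 : ∀ x, DifferentiableAt ℝ (deriv h) x)
    (h0 : h 0 = 0) (h0' : deriv h 0 = 0)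
    (hbound : ∀ x, c₁ ≤ deriv (deriv h) x ∧ deriv (deriv h) x ≤ c₂) :
    ∀ (p : ℕ), Even p → 0 < p → ∀ x Δ : ℝ,
      c₁^(3*p) / (8*c₂)^(2*p) * (x^(2*p-2) * Δ^2 + Δ^(2*p)) ≤
        (h (x+Δ))^p - ((h x)^p + p * (h x)^(p-1) * deriv h x * Δ) ∧
      (h (x+Δ))^p - ((h x)^p + p * (h x)^(p-1) * deriv h x * Δ) ≤
        (16*c₂)^p * (x^(2*p-2) * Δ^2 + Δ^(2*p)) := by
  intro p _ hp x Δ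
  obtain ⟨n, rfl⟩ : ∃ n, p = n + 1 := ⟨p - 1, by omega⟩
  have hh : ∀ t, HasDerivAt h (deriv h t) t := fun t => (hd t).hasDerivAt
  have hh' : ∀ t, HasDerivAt (deriv h) (deriv (deriv h) t) t := fun t => (hd2 t).hasDerivAt
  have hG : ∀ t, HasDerivAt (fun t => h t ^ (n + 1)) ((n + 1 : ℝ) * h t ^ n * deriv h t) t :=
    fun t => by simpa using (hh t).fun_pow (n + 1)
  have hG' := hasDerivAt_deriv_pow hh hh' n
  have hbregman :
      h (x + Δ) ^ (n + 1) - (h x ^ (n + 1) + ↑(n + 1) * h x ^ (n + 1 - 1) * deriv h x * Δ) =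
        bregman (fun t => h t ^ (n + 1)) (fun t => (n + 1 : ℝ) * h t ^ n * deriv h t) x
          (x + Δ) := by
    simp only [bregman, add_sub_cancel_left, Nat.add_sub_cancel, Nat.cast_succ]; ring
  have hc₂ : 0 ≤ c₂ := hc₁.le.trans hc
  have hS : 0 ≤ x ^ (2 * n) * Δ ^ 2 + Δ ^ (2 * n + 2) := by
    simp only [pow_add, pow_mul]; positivity
  rw [hbregman, show 2 * (n + 1) - 2 = 2 * n by omega, show 2 * (n + 1) = 2 * n + 2 by ring]
  constructor
  · calc _ ≤ 2 * (c₁ / 2) ^ (n + 1) / (64 * 16 ^ n) * (x ^ (2 * n) * Δ ^ 2 + Δ ^ (2 * n + 2)) :=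
          mul_le_mul_of_nonneg_right (pow_three_mul_div_pow_two_mul_le hc₁ hc n) hS
      _ ≤ _ := le_bregman_add_of_pow_le_deriv2 (by positivity) hG hG'
          (le_deriv2_pow hh hh' h0 h0' hc₁ (fun t => (hbound t).1) n) x Δ
  · calc _ ≤ 4 ^ n * ((n + 1) ^ 2 * c₂ ^ (n + 1)) / 2 * (x ^ (2 * n) * Δ ^ 2 + Δ ^ (2 * n + 2)) :=
          bregman_add_le_of_deriv2_le_pow (by positivity) hG hG'
            (deriv2_pow_le hh hh' h0 h0' hc₁ hbound n) x Δ
      _ ≤ _ := mul_le_mul_of_nonneg_right (four_pow_mul_succ_sq_mul_div_two_le hc₂ n) hS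
end PowerOfStronglyConvex
end

section
/- Let p be an even positive integer, E a finite index set, hₑ : ℝ → ℝ convex functions, and h(x) = ∑ₑ hₑ(xₑ). Let OPT = min over {f : Bᵀf = d} of h(f), achieved at f*. Let f satisfy Bᵀf = d, and let C₁, C₂ > 0 be constants such that for each e there exist rₑ, sₑ ≥ 0 and gₑ ∈ ℝ with C₁(rₑΔ² + sₑΔ^p) ≤ hₑ(fₑ + Δ) − hₑ(fₑ) − gₑΔ ≤ C₂(rₑΔ² + sₑΔ^p) for all Δ ∈ ℝ. If Δ̂ = argmin over {Δ : BᵀΔ = 0} of gᵀΔ + C₁(∑ₑ rₑΔₑ² + ∑ₑ sₑΔₑ^p), then h(f + (C₁/C₂)Δ̂) − OPT ≤ (1 − C₁/C₂)(h(f) − OPT). -/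
/-!
Write `λ = C₁ / C₂` and `q(Δ) = r Δ² + s Δ^p`. On each coordinate the sandwich bounds give
`h(f + λΔ) ≤ h(f) + λ (gΔ + C₁ q(Δ))`: for `λ ≤ 1` because `q(λΔ) ≤ λ² q(Δ)`, and for `λ > 1`
because the sandwich forces `q(λΔ) = 0`. Summing and using the minimality of `Δ̂` against the
feasible direction `f* − f`, whose surrogate value is at most `h(f*) − h(f)` by the lower
sandwich bound, gives `h(f + λΔ̂) ≤ h(f) + λ (h(f*) − h(f))`.
-/

open Finset

lemma mul_sq_add_mul_pow_nonneg {p : ℕ} (hp : Even p) {r s : ℝ} (hr : 0 ≤ r) (hs : 0 ≤ s)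
    (x : ℝ) : 0 ≤ r * x ^ 2 + s * x ^ p :=
  add_nonneg (mul_nonneg hr (sq_nonneg x)) (mul_nonneg hs (hp.pow_nonneg x))

lemma mul_sq_add_mul_pow_smul_le {p : ℕ} (hp : Even p) (hp2 : 2 ≤ p) (r : ℝ) {s t : ℝ}
    (hs : 0 ≤ s) (ht0 : 0 ≤ t) (ht1 : t ≤ 1) (x : ℝ) :
    r * (t * x) ^ 2 + s * (t * x) ^ p ≤ t ^ 2 * (r * x ^ 2 + s * x ^ p) := by
  have hpow : t ^ p ≤ t ^ 2 := pow_le_pow_of_le_one ht0 ht1 hp2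
  have hsx : 0 ≤ s * x ^ p := mul_nonneg hs (hp.pow_nonneg x)
  calc r * (t * x) ^ 2 + s * (t * x) ^ p = t ^ 2 * (r * x ^ 2) + t ^ p * (s * x ^ p) := by ring
    _ ≤ t ^ 2 * (r * x ^ 2) + t ^ 2 * (s * x ^ p) := by gcongr
    _ = t ^ 2 * (r * x ^ 2 + s * x ^ p) := by ring

lemma le_mul_of_sandwich {φ q : ℝ → ℝ} {C₁ C₂ : ℝ} (hC₁ : 0 < C₁) (hC₂ : 0 < C₂)
    (hq : ∀ y, 0 ≤ q y) (hlow : ∀ y, C₁ * q y ≤ φ y) (hup : ∀ y, φ y ≤ C₂ * q y)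
    (hscale : ∀ t, 0 ≤ t → t ≤ 1 → ∀ y, q (t * y) ≤ t ^ 2 * q y) (x : ℝ) :
    φ (C₁ / C₂ * x) ≤ C₁ / C₂ * (C₁ * q x) := by
  have hratio : 0 < C₁ / C₂ := div_pos hC₁ hC₂
  rcases le_or_gt C₁ C₂ with hle | hlt
  · calc φ (C₁ / C₂ * x) ≤ C₂ * q (C₁ / C₂ * x) := hup _
      _ ≤ C₂ * ((C₁ / C₂) ^ 2 * q x) :=
          mul_le_mul_of_nonneg_left (hscale _ hratio.le ((div_le_one hC₂).2 hle) x) hC₂.le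
      _ = C₁ / C₂ * (C₁ * q x) := by field_simp
  · have hzero : q (C₁ / C₂ * x) ≤ 0 := by
      nlinarith [hlow (C₁ / C₂ * x), hup (C₁ / C₂ * x)]
    calc φ (C₁ / C₂ * x) ≤ C₂ * q (C₁ / C₂ * x) := hup _
      _ ≤ 0 := mul_nonpos_of_nonneg_of_nonpos hC₂.le hzero
      _ ≤ C₁ / C₂ * (C₁ * q x) := by have := hq x; positivity

section Surrogate

variable {E : Type} [Fintype E]

def surrogate (g r s : E → ℝ) (C : ℝ) (p : ℕ) (Δ : E → ℝ) : ℝ :=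
  (∑ e, g e * Δ e) + C * ((∑ e, r e * Δ e ^ 2) + ∑ e, s e * Δ e ^ p)

lemma surrogate_eq_sum (g r s : E → ℝ) (C : ℝ) (p : ℕ) (Δ : E → ℝ) :
    surrogate g r s C p Δ = ∑ e, (g e * Δ e + C * (r e * Δ e ^ 2 + s e * Δ e ^ p)) := by
  simp only [surrogate, sum_add_distrib, mul_sum, mul_add]

end Surrogate

theorem stmt_13_general {V E : Type} [Fintype V] [Fintype E]
    (p : ℕ) (hp : Even p) (hp0 : 0 < p)
    (B : Matrix E V ℝ) (d : V → ℝ)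
    (he : E → ℝ → ℝ)
    (fstar : E → ℝ) (hfstar : B.transpose.mulVec fstar = d)
    (f : E → ℝ) (hf : B.transpose.mulVec f = d)
    (C₁ C₂ : ℝ) (hC₁ : 0 < C₁) (hC₂ : 0 < C₂)
    (r s g : E → ℝ) (hr : ∀ e, 0 ≤ r e) (hs : ∀ e, 0 ≤ s e)
    (hbound : ∀ e (Δ : ℝ),
      C₁ * (r e * Δ^2 + s e * Δ^p) ≤ he e (f e + Δ) - (he e (f e) + g e * Δ) ∧
      he e (f e + Δ) - (he e (f e) + g e * Δ) ≤ C₂ * (r e * Δ^2 + s e * Δ^p))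
    (Dhat : E → ℝ)
    (hDopt : ∀ Δ : E → ℝ, B.transpose.mulVec Δ = 0 →
      (∑ e, g e * Dhat e) + C₁ * ((∑ e, r e * (Dhat e)^2) + ∑ e, s e * (Dhat e)^p) ≤
      (∑ e, g e * Δ e) + C₁ * ((∑ e, r e * (Δ e)^2) + ∑ e, s e * (Δ e)^p)) :
    (∑ e, he e (f e + (C₁ / C₂) * Dhat e)) - (∑ e, he e (fstar e)) ≤
      (1 - C₁ / C₂) * ((∑ e, he e (f e)) - ∑ e, he e (fstar e)) := by
  have hp2 : 2 ≤ p := by obtain ⟨k, rfl⟩ := hp; omega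
  have hstep : ∑ e, he e (f e + C₁ / C₂ * Dhat e) ≤
      ∑ e, he e (f e) + C₁ / C₂ * surrogate g r s C₁ p Dhat := by
    rw [surrogate_eq_sum, mul_sum, ← sum_add_distrib]
    gcongr with e
    have := le_mul_of_sandwich (φ := fun Δ => he e (f e + Δ) - (he e (f e) + g e * Δ)) hC₁ hC₂
      (mul_sq_add_mul_pow_nonneg hp (hr e) (hs e)) (fun Δ => (hbound e Δ).1)
      (fun Δ => (hbound e Δ).2)
      (fun t ht0 ht1 => mul_sq_add_mul_pow_smul_le hp hp2 (r e) (hs e) ht0 ht1) (Dhat e)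
    linarith
  have hfeasible : surrogate g r s C₁ p (fstar - f) ≤ ∑ e, he e (fstar e) - ∑ e, he e (f e) := by
    rw [surrogate_eq_sum, ← sum_sub_distrib]
    gcongr with e
    have := (hbound e (fstar e - f e)).1
    rw [add_sub_cancel] at this
    simp only [Pi.sub_apply]
    linarith
  have hmin : surrogate g r s C₁ p Dhat ≤ surrogate g r s C₁ p (fstar - f) :=
    hDopt _ (by rw [Matrix.mulVec_sub, hfstar, hf, sub_self])
  linarith [mul_le_mul_of_nonneg_left (hmin.trans hfeasible) (div_pos hC₁ hC₂).le]

theorem stmt_13 {V E : Type} [Fintype V] [Fintype E]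
    (p : ℕ) (hp : Even p) (hp0 : 0 < p)
    (B : Matrix E V ℝ) (d : V → ℝ)
    (he : E → ℝ → ℝ) (hconv : ∀ e, ConvexOn ℝ Set.univ (he e))
    (fstar : E → ℝ) (hfstar : B.transpose.mulVec fstar = d)
    (hopt : ∀ f', B.transpose.mulVec f' = d → (∑ e, he e (fstar e)) ≤ ∑ e, he e (f' e))
    (f : E → ℝ) (hf : B.transpose.mulVec f = d)
    (C₁ C₂ : ℝ) (hC₁ : 0 < C₁) (hC₂ : 0 < C₂)
    (r s g : E → ℝ) (hr : ∀ e, 0 ≤ r e) (hs : ∀ e, 0 ≤ s e)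
    (hbound : ∀ e (Δ : ℝ),
      C₁ * (r e * Δ^2 + s e * Δ^p) ≤ he e (f e + Δ) - (he e (f e) + g e * Δ) ∧
      he e (f e + Δ) - (he e (f e) + g e * Δ) ≤ C₂ * (r e * Δ^2 + s e * Δ^p))
    (Dhat : E → ℝ) (hDhat : B.transpose.mulVec Dhat = 0)
    (hDopt : ∀ Δ : E → ℝ, B.transpose.mulVec Δ = 0 →
      (∑ e, g e * Dhat e) + C₁ * ((∑ e, r e * (Dhat e)^2) + ∑ e, s e * (Dhat e)^p) ≤
      (∑ e, g e * Δ e) + C₁ * ((∑ e, r e * (Δ e)^2) + ∑ e, s e * (Δ e)^p)) :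
    (∑ e, he e (f e + (C₁ / C₂) * Dhat e)) - (∑ e, he e (fstar e)) ≤
      (1 - C₁ / C₂) * ((∑ e, he e (f e)) - ∑ e, he e (fstar e)) :=
  stmt_13_general p hp hp0 B d he fstar hfstar f hf C₁ C₂ hC₁ hC₂ r s g hr hs hbound Dhat hDopt
end

section
/- Let V : ℝ^E → ℝ be convex differentiable, B a fixed matrix, f* minimize V over {Bᵀf = tχ}, and f̂ minimize the Bregman divergence D_V(f* + f ‖ f*) = V(f* + f) − V(f*) − ∇V(f*)ᵀf over {Bᵀf = δχ}. Then f* + f̂ minimizes V over {Bᵀf = (t+δ)χ}. -/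
lemma grad_perp_ker {m : ℕ} (V : EuclideanSpace ℝ (Fin m) → ℝ)
    (hdiff : Differentiable ℝ V) (x h : EuclideanSpace ℝ (Fin m))
    (hmin : ∀ s : ℝ, V x ≤ V (x + s • h)) :
    (inner ℝ (gradient V x) h : ℝ) = 0 := by
  set φ : ℝ → ℝ := fun s => V (x + s • h) with hφ
  have hgrad : HasGradientAt V (gradient V x) x := (hdiff x).hasGradientAt
  have hfd : HasFDerivAt V ((InnerProductSpace.toDual ℝ _) (gradient V x)) x :=
    hgrad.hasFDerivAt
  have hcurve : HasDerivAt (fun s : ℝ => x + s • h) h 0 := by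
    simpa using ((hasDerivAt_id (0 : ℝ)).smul_const h).const_add x
  have hφd : HasDerivAt φ ((inner ℝ (gradient V x) h : ℝ)) 0 := by
    have hfd' : HasFDerivAt V ((InnerProductSpace.toDual ℝ _) (gradient V x))
        (x + (0 : ℝ) • h) := by simpa using hfd
    have := hfd'.comp_hasDerivAt 0 hcurve
    simpa [φ, InnerProductSpace.toDual_apply_apply, Function.comp_def] using this
  have hloc : IsLocalMin φ 0 := by
    apply Filter.Eventually.of_forall
    intro s
    simpa [φ] using hmin s
  have := hloc.hasDerivAt_eq_zero hφd
  simpa using this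

theorem stmt_19 {m n : ℕ} (B : Matrix (Fin m) (Fin n) ℝ) (χ : Fin n → ℝ) (t δ : ℝ)
    (Vf : EuclideanSpace ℝ (Fin m) → ℝ)
    (hV : ConvexOn ℝ Set.univ Vf) (hdiff : Differentiable ℝ Vf)
    (fstar : EuclideanSpace ℝ (Fin m)) (hfs : B.transpose.mulVec fstar = t • χ)
    (hfsopt : ∀ f : EuclideanSpace ℝ (Fin m), B.transpose.mulVec f = t • χ → Vf fstar ≤ Vf f)
    (fhat : EuclideanSpace ℝ (Fin m)) (hfh : B.transpose.mulVec fhat = δ • χ)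
    (hfhopt : ∀ f : EuclideanSpace ℝ (Fin m), B.transpose.mulVec f = δ • χ →
      Vf (fstar + fhat) - Vf fstar - (inner ℝ (gradient Vf fstar) fhat : ℝ) ≤
      Vf (fstar + f) - Vf fstar - (inner ℝ (gradient Vf fstar) f : ℝ)) :
    B.transpose.mulVec (fstar + fhat) = (t + δ) • χ ∧
    ∀ f : EuclideanSpace ℝ (Fin m), B.transpose.mulVec f = (t + δ) • χ →
      Vf (fstar + fhat) ≤ Vf f := by
  have hBadd : B.transpose.mulVec (fstar + fhat) = (t + δ) • χ := by
    have : B.transpose.mulVec (fstar + fhat)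
        = B.transpose.mulVec fstar + B.transpose.mulVec fhat :=
      Matrix.mulVec_add _ _ _
    rw [this, hfs, hfh, add_smul]
  refine ⟨hBadd, fun f hf => ?_⟩
  set g : EuclideanSpace ℝ (Fin m) := f - fstar with hg
  have hBg : B.transpose.mulVec g = δ • χ := by
    have : B.transpose.mulVec g = B.transpose.mulVec f - B.transpose.mulVec fstar :=
      Matrix.mulVec_sub _ _ _
    rw [this, hf, hfs, add_smul]; abel
  have hkey := hfhopt g hBg
  have hfg : fstar + g = f := by show fstar + (f - fstar) = f; abel
  rw [hfg] at hkey
  -- gradient orthogonal to kernel direction fhat - g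
  have hker : B.transpose.mulVec (fhat - g) = 0 := by
    have : B.transpose.mulVec (fhat - g)
        = B.transpose.mulVec fhat - B.transpose.mulVec g := Matrix.mulVec_sub _ _ _
    rw [this, hfh, hBg, sub_self]
  have hperp : (inner ℝ (gradient Vf fstar) (fhat - g) : ℝ) = 0 := by
    apply grad_perp_ker Vf hdiff fstar (fhat - g)
    intro s
    apply hfsopt
    have : B.transpose.mulVec (fstar + s • (fhat - g))
        = B.transpose.mulVec fstar + s • B.transpose.mulVec (fhat - g) := by
      rw [Matrix.mulVec_add, Matrix.mulVec_smul]
    rw [WithLp.ofLp_add, WithLp.ofLp_smul, WithLp.ofLp_sub, this, hker, hfs]; simp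
  have hinner : (inner ℝ (gradient Vf fstar) fhat : ℝ) = inner ℝ (gradient Vf fstar) g := by
    have := hperp
    rw [inner_sub_right] at this
    linarith
  rw [hinner] at hkey
  linarith
end
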